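/- No three orthonormal bases of C² can induce the same compact structure: if B, B', B'' are orthonormal bases of C² that are pairwise mutually unbiased, then the three bilinear forms (u,v) ↦ Σ_k ⟨e_k|u⟩⟨e_k|v⟩ (defined from copying in each basis, i.e. the induced 'cup' maps C²⊗C² → C) cannot all be equal; in fact at most two mutually unbiased bases of C² can share the same induced symmetric bilinear form up to scalar. -/

import Mathlib

open Complex

/-- Standard inner product on `C²`, conjugate-linear in the first slot. -/
noncomputable def ip (u v : Fin 2 → ℂ) : ℂ := ∑ k, star (u k) * v k

/-- Orthonormality of a pair of vectors of `C²`. -/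
def Orthonormal2 (B : Fin 2 → Fin 2 → ℂ) : Prop :=
  ∀ i j, ip (B i) (B j) = if i = j then 1 else 0

/-- Mutual unbiasedness of two orthonormal bases of `C²`. -/
def MUB (B B' : Fin 2 → Fin 2 → ℂ) : Prop :=
  ∀ i j, ‖ip (B i) (B' j)‖ ^ 2 = 1 / 2

/-- The bilinear form ('cup') induced by copying in the basis `B`:
`β(u,v) = Σ_k ⟨e_k, u⟩·⟨e_k, v⟩`. -/
noncomputable def cup (B : Fin 2 → Fin 2 → ℂ) (u v : Fin 2 → ℂ) : ℂ :=
  ∑ k, ip (B k) u * ip (B k) v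

open Matrix

lemma ip_conj (u v : Fin 2 → ℂ) : ip u v = star (ip v u) := by
  simp [ip, Fin.sum_univ_two, mul_comm]

lemma complete {B : Fin 2 → Fin 2 → ℂ} (hB : Orthonormal2 B) (k l : Fin 2) :
    ∑ i, B i k * star (B i l) = if k = l then 1 else 0 := by
  classical
  set M : Matrix (Fin 2) (Fin 2) ℂ := Matrix.of (fun i k => star (B i k)) with hM
  have h1 : M * Mᴴ = 1 := by
    ext i j
    have h := hB i j
    simp only [ip, Fin.sum_univ_two, Complex.star_def] at h
    simp [Matrix.mul_apply, Matrix.conjTranspose_apply, hM, Matrix.one_apply, h]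
  have h2 : Mᴴ * M = 1 := mul_eq_one_comm.mp h1
  simpa [Matrix.mul_apply, Matrix.conjTranspose_apply, hM, Matrix.one_apply, mul_comm] using
    congrFun (congrFun h2 k) l

lemma parseval {B : Fin 2 → Fin 2 → ℂ} (hB : Orthonormal2 B) (u v : Fin 2 → ℂ) :
    ip u v = ∑ j, ip u (B j) * ip (B j) v := by
  have e00 := complete hB 0 0
  have e01 := complete hB 0 1
  have e10 := complete hB 1 0
  have e11 := complete hB 1 1
  simp only [Fin.sum_univ_two, Complex.star_def, if_pos, if_neg, Fin.zero_eq_one_iff,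
    Fin.one_eq_zero_iff] at e00 e01 e10 e11
  norm_num at e00 e01 e10 e11
  simp only [ip, Fin.sum_univ_two, Complex.star_def]
  linear_combination -((starRingEnd ℂ) (u 0) * v 0) * e00 - ((starRingEnd ℂ) (u 0) * v 1) * e01 -
    ((starRingEnd ℂ) (u 1) * v 0) * e10 - ((starRingEnd ℂ) (u 1) * v 1) * e11

lemma normsq_half {z : ℂ} (h : ‖z‖ ^ 2 = 1 / 2) : z * star z = 1 / 2 := by
  have : z * star z = ((‖z‖ ^ 2 : ℝ) : ℂ) := by
    rw [Complex.sq_norm]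
    simpa using (Complex.mul_conj z)
  rw [this, h]
  norm_num

lemma key {B C : Fin 2 → Fin 2 → ℂ} (hB : Orthonormal2 B) (hC : Orthonormal2 C)
    (hM : MUB B C) {c : ℂ} (hc : ∀ u v, cup C u v = c * cup B u v) (i j : Fin 2) :
    ip (C i) (B j) * ip (C i) (B j) = c / 2 := by
  classical
  set U : Matrix (Fin 2) (Fin 2) ℂ := Matrix.of (fun i j => ip (C i) (B j)) with hU
  have hU1 : U * Uᴴ = 1 := by
    ext a b
    have hp := parseval hB (C a) (C b)
    rw [hC a b] at hp
    simp only [Matrix.mul_apply, Matrix.conjTranspose_apply, hU, Matrix.of_apply,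
      Matrix.one_apply]
    have hsum : ∑ x : Fin 2, ip (C a) (B x) * star (ip (C b) (B x)) =
        ∑ x : Fin 2, ip (C a) (B x) * ip (B x) (C b) :=
      Finset.sum_congr rfl (fun k _ => by rw [ip_conj (B k) (C b)])
    rw [hsum, ← hp]
  have hU2 : Uᵀ * U = c • 1 := by
    ext a b
    have hcab := hc (B a) (B b)
    have hBab : cup B (B a) (B b) = if a = b then 1 else 0 := by
      simp only [cup]
      rw [Finset.sum_congr rfl (fun k _ => by rw [hB k a, hB k b])]
      fin_cases a <;> fin_cases b <;> simp [Fin.sum_univ_two]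
    rw [hBab] at hcab
    simp only [Matrix.transpose_apply, Matrix.mul_apply, hU, Matrix.of_apply,
      Matrix.smul_apply, Matrix.one_apply]
    rw [show (∑ k, ip (C k) (B a) * ip (C k) (B b)) = cup C (B a) (B b) from rfl, hcab]
    by_cases hab : a = b <;> simp [hab]
  have hUt : Uᵀ = c • Uᴴ := by
    calc Uᵀ = Uᵀ * (U * Uᴴ) := by rw [hU1, mul_one]
    _ = (Uᵀ * U) * Uᴴ := by rw [mul_assoc]
    _ = c • Uᴴ := by rw [hU2, Matrix.smul_mul, Matrix.one_mul]
  have hz : ∀ a b, U a b = c * star (U a b) := by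
    intro a b
    have := congrFun (congrFun hUt b) a
    simpa [Matrix.transpose_apply, Matrix.conjTranspose_apply, Matrix.smul_apply] using this
  have hzz : U i j * star (U i j) = 1 / 2 := by
    apply normsq_half
    have he : (U i j : ℂ) = star (ip (B j) (C i)) := ip_conj _ _
    rw [he, Complex.star_def, Complex.norm_conj]
    exact hM j i
  show U i j * U i j = c / 2
  linear_combination (U i j) * hz i j + c * hzz

/-- No three pairwise mutually unbiased orthonormal bases of `C²` can induce
proportional bilinear forms (i.e. share a single compact structure). -/
theorem no_three_bases_share_compact_structure
    (B B' B'' : Fin 2 → Fin 2 → ℂ)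
    (hB : Orthonormal2 B) (hB' : Orthonormal2 B') (hB'' : Orthonormal2 B'')
    (hBB' : MUB B B') (hBB'' : MUB B B'') (hB'B'' : MUB B' B'')
    (h1 : ∃ c : ℂ, c ≠ 0 ∧ ∀ u v, cup B' u v = c * cup B u v)
    (h2 : ∃ c : ℂ, c ≠ 0 ∧ ∀ u v, cup B'' u v = c * cup B u v) :
    False := by
  obtain ⟨c, hc, hcB'⟩ := h1
  obtain ⟨d, hd, hcB''⟩ := h2
  set p := ip (B' 0) (B 0) with hpdef
  set q := ip (B' 0) (B 1) with hqdef
  set r := ip (B'' 0) (B 0) with hrdef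
  set s := ip (B'' 0) (B 1) with hsdef
  have hp2 : p * p = c / 2 := key hB hB' hBB' hcB' 0 0
  have hq2 : q * q = c / 2 := key hB hB' hBB' hcB' 0 1
  have hr2 : r * r = d / 2 := key hB hB'' hBB'' hcB'' 0 0
  have hs2 : s * s = d / 2 := key hB hB'' hBB'' hcB'' 0 1
  have hpp : p * star p = 1 / 2 := by
    apply normsq_half
    rw [hpdef, ip_conj (B' 0) (B 0), Complex.star_def, Complex.norm_conj]
    exact hBB' 0 0
  have hrr : r * star r = 1 / 2 := by
    apply normsq_half
    rw [hrdef, ip_conj (B'' 0) (B 0), Complex.star_def, Complex.norm_conj]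
    exact hBB'' 0 0
  set x := ip (B' 0) (B'' 0) with hxdef
  have hxx : x * star x = 1 / 2 := normsq_half (hB'B'' 0 0)
  have hx : x = p * star r + q * star s := by
    rw [hxdef, parseval hB (B' 0) (B'' 0), Fin.sum_univ_two,
      ip_conj (B 0) (B'' 0), ip_conj (B 1) (B'' 0)]
  have hpq : (q - p) * (q + p) = 0 := by linear_combination hq2 - hp2
  have hrs : (s - r) * (s + r) = 0 := by linear_combination hs2 - hr2
  have hq' : q = p ∨ q = -p := by
    rcases mul_eq_zero.mp hpq with h | h
    · left; exact sub_eq_zero.mp h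
    · right; exact eq_neg_of_add_eq_zero_left h
  have hs' : s = r ∨ s = -r := by
    rcases mul_eq_zero.mp hrs with h | h
    · left; exact sub_eq_zero.mp h
    · right; exact eq_neg_of_add_eq_zero_left h
  rcases hq' with hq1 | hq1 <;> rcases hs' with hs1 | hs1
  · have : (1 / 2 : ℂ) = 1 := by
      rw [← hxx, hx, hq1, hs1]
      simp only [star_add, star_mul', star_star]
      linear_combination (4 * (r * star r)) * hpp + 2 * hrr
    norm_num at this
  · have : (1 / 2 : ℂ) = 0 := by
      rw [← hxx, hx, hq1, hs1]
      simp only [star_neg, star_add, star_mul', star_star]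
      ring
    norm_num at this
  · have : (1 / 2 : ℂ) = 0 := by
      rw [← hxx, hx, hq1, hs1]
      simp only [star_neg, star_add, star_mul', star_star]
      ring
    norm_num at this
  · have : (1 / 2 : ℂ) = 1 := by
      rw [← hxx, hx, hq1, hs1]
      simp only [star_neg, star_add, star_mul', star_star]
      linear_combination (4 * (r * star r)) * hpp + 2 * hrr
    norm_num at this
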